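/- Suppose for each integer k ≥ 2 the sequence α_k(n) converges as n → ∞ to a real number α_k. Then lim_{k→∞} α_k = 1 (the function k ↦ α_k tends to 1 along the atTop filter on ℕ). -/

import Mathlib

open Filter

namespace Levenshtein

/-- Costs of edit operations (as in the older Mathlib). -/
structure Cost (α β δ : Type*) where
  delete : α → δ
  insert : β → δ
  substitute : α → β → δ

/-- Unit costs for deletion, insertion and substitution, cost `0` for a match. -/
def defaultCost {α : Type*} [DecidableEq α] : Cost α α ℕ where
  delete _ := 1
  insert _ := 1
  substitute a b := if a = b then 0 else 1

/-- One row step of the dynamic program (as in the older Mathlib). -/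
def impl {α β δ : Type*} [AddZeroClass δ] [Min δ] (C : Cost α β δ) (xs : List α) (y : β)
    (d : {r : List δ // 0 < r.length}) : {r : List δ // 0 < r.length} :=
  let ⟨ds, w⟩ := d
  xs.zip (ds.zip ds.tail) |>.foldr
    (init := ⟨[ds.getLast (List.length_pos_iff.mp w) + C.insert y], by simp⟩)
    (fun ⟨x, d₀, d₁⟩ ⟨r, w⟩ =>
      ⟨min (C.delete x + r[0]) (min (C.insert y + d₀) (C.substitute x y + d₁)) :: r, by simp⟩)

end Levenshtein

open Levenshtein

/-- Edit distances between all suffixes (as in the older Mathlib). -/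
def suffixLevenshtein {α β δ : Type*} [AddZeroClass δ] [Min δ] (C : Cost α β δ)
    (xs : List α) (ys : List β) : {r : List δ // 0 < r.length} :=
  ys.foldr
    (impl C xs)
    (xs.foldr (init := ⟨[0], by simp⟩) (fun a ⟨r, w⟩ => ⟨(C.delete a + r[0]) :: r, by simp⟩))

/-- The Levenshtein edit distance (as in the older Mathlib). -/
def levenshtein {α β δ : Type*} [AddZeroClass δ] [Min δ] (C : Cost α β δ)
    (xs : List α) (ys : List β) : δ :=
  let ⟨r, _⟩ := suffixLevenshtein C xs ys
  r[0]

/-- Edit distance between two strings over `Fin k`, with unit costs for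
substitution, deletion and insertion, and cost `0` for a match. -/
def editDist {k : ℕ} (x y : List (Fin k)) : ℕ :=
  levenshtein Levenshtein.defaultCost x y

/-- `e_k(n)`: the average edit distance between two independent uniformly
random strings of length `n` over an alphabet of size `k`. -/
noncomputable def avgEditDist (k n : ℕ) : ℝ :=
  ((k : ℝ) ^ (2 * n))⁻¹ *
    ∑ x : Fin n → Fin k, ∑ y : Fin n → Fin k,
      (editDist (List.ofFn x) (List.ofFn y) : ℝ)

/-- `α_k(n) = e_k(n)/n`. -/
noncomputable def alphaN (k n : ℕ) : ℝ := avgEditDist k n / n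

/-!
Two strings of length `n` are within edit distance `n` (substitute position by position), so
`α_k(n) ≤ 1`. Conversely, an edit script of cost `e` leaves a common subsequence of length at least
`n - e`. Once the two index sets of a common subsequence of length `d` are fixed, a uniformly
random pair `(x, y)` matches on them with probability `k⁻ᵈ`, and there are at most `2ⁿ · 2ⁿ`
pairs of index sets; so the edit distance is at least `n - d` except with probability
`4ⁿ k⁻ᵈ`. Taking `n = m j`, `d = j` and `k > 4ᵐ` gives `α_k ≥ 1 - 1/m`.
-/

namespace Levenshtein

variable {α β δ : Type*} [AddZeroClass δ] [Min δ] (C : Cost α β δ)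

theorem suffixLevenshtein_cons_left_tail (x : α) (xs : List α) (ys : List β) :
    (suffixLevenshtein C (x :: xs) ys).1.tail = (suffixLevenshtein C xs ys).1 := by
  induction ys with
  | nil => rfl
  | cons y ys ih =>
    change (impl C (x :: xs) y (suffixLevenshtein C (x :: xs) ys)).1.tail =
      (impl C xs y (suffixLevenshtein C xs ys)).1
    generalize suffixLevenshtein C (x :: xs) ys = s, suffixLevenshtein C xs ys = t at ih
    obtain ⟨_ | ⟨_, r⟩, hs⟩ := s
    · simp at hs
    obtain ⟨_ | ⟨_, _⟩, ht⟩ := t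
    · simp at ht
    subst ih
    rfl

theorem suffixLevenshtein_cons_left (x : α) (xs : List α) (ys : List β) :
    (suffixLevenshtein C (x :: xs) ys).1 =
      levenshtein C (x :: xs) ys :: (suffixLevenshtein C xs ys).1 := by
  rw [← suffixLevenshtein_cons_left_tail C x xs ys]
  unfold levenshtein
  obtain ⟨_ | ⟨_, _⟩, h⟩ := suffixLevenshtein C (x :: xs) ys
  · simp at h
  · rfl

theorem impl_cons_head (x : α) (xs : List α) (y : β) {a : δ}
    {s t : {r : List δ // 0 < r.length}} (h : s.1 = a :: t.1) :
    (impl C (x :: xs) y s).1[0]'(impl C (x :: xs) y s).2 =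
      min (C.delete x + (impl C xs y t).1[0]'(impl C xs y t).2)
        (min (C.insert y + a) (C.substitute x y + t.1[0]'t.2)) := by
  obtain ⟨_ | ⟨b, r⟩, ht⟩ := t
  · simp at ht
  obtain ⟨_, hs⟩ := s
  subst h
  rfl

theorem levenshtein_cons_cons (x : α) (xs : List α) (y : β) (ys : List β) :
    levenshtein C (x :: xs) (y :: ys) =
      min (C.delete x + levenshtein C xs (y :: ys))
        (min (C.insert y + levenshtein C (x :: xs) ys)
          (C.substitute x y + levenshtein C xs ys)) :=
  impl_cons_head C x xs y (suffixLevenshtein_cons_left C x xs ys)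

end Levenshtein

section EditDistance

variable {α : Type*} [DecidableEq α]

theorem levenshtein_defaultCost_cons_cons (x : α) (xs : List α) (y : α) (ys : List α) :
    levenshtein defaultCost (x :: xs) (y :: ys) =
      min (1 + levenshtein defaultCost xs (y :: ys))
        (min (1 + levenshtein defaultCost (x :: xs) ys)
          ((if x = y then 0 else 1) + levenshtein defaultCost xs ys)) :=
  levenshtein_cons_cons defaultCost x xs y ys

theorem levenshtein_defaultCost_le_length {xs ys : List α} (h : xs.length = ys.length) :
    levenshtein defaultCost xs ys ≤ xs.length := by
  induction xs generalizing ys with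
  | nil =>
    obtain _ | ⟨y, ys⟩ := ys
    · rfl
    · simp at h
  | cons x xs ih =>
    obtain _ | ⟨y, ys⟩ := ys
    · simp at h
    have := ih (ys := ys) (by simpa using h)
    rw [levenshtein_defaultCost_cons_cons]
    split_ifs <;> simp only [List.length_cons] <;> omega

theorem exists_common_sublist_length_le_add_levenshtein (xs ys : List α) :
    ∃ z : List α, z.Sublist xs ∧ z.Sublist ys ∧
      xs.length ≤ z.length + levenshtein defaultCost xs ys := by
  induction xs generalizing ys with
  | nil => exact ⟨[], .slnil, List.nil_sublist _, by simp⟩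
  | cons x xs ihx =>
    induction ys with
    | nil =>
      obtain ⟨z, -, hz, hlen⟩ := ihx []
      rw [List.sublist_nil.mp hz, List.length_nil] at hlen
      refine ⟨[], List.nil_sublist _, .slnil, ?_⟩
      -- the first row of the table is the initial fold, so this unfolding is definitional
      change xs.length + 1 ≤ 0 + (1 + levenshtein defaultCost xs [])
      omega
    | cons y ys ihy =>
      obtain ⟨z₁, hx₁, hy₁, h₁⟩ := ihx (y :: ys)
      obtain ⟨z₂, hx₂, hy₂, h₂⟩ := ihy
      obtain ⟨z₃, hx₃, hy₃, h₃⟩ := ihx ys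
      simp only [List.length_cons] at *
      obtain h | h | h : levenshtein defaultCost (x :: xs) (y :: ys) =
            1 + levenshtein defaultCost xs (y :: ys) ∨
          levenshtein defaultCost (x :: xs) (y :: ys) =
            1 + levenshtein defaultCost (x :: xs) ys ∨
          levenshtein defaultCost (x :: xs) (y :: ys) =
            (if x = y then 0 else 1) + levenshtein defaultCost xs ys := by
        rw [levenshtein_defaultCost_cons_cons]
        omega
      · exact ⟨z₁, hx₁.cons x, hy₁, by omega⟩
      · exact ⟨z₂, hx₂, hy₂.cons y, by omega⟩
      · split_ifs at h with hxy
        · subst hxy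
          refine ⟨x :: z₃, hx₃.cons_cons x, hy₃.cons_cons x, ?_⟩
          simp only [List.length_cons]
          omega
        · exact ⟨z₃, hx₃.cons x, hy₃.cons y, by omega⟩

end EditDistance

section CommonSubseq

open Finset Function

variable {α : Type*} {n d : ℕ}

def HasCommonSubseq (d : ℕ) (x y : Fin n → α) : Prop :=
  ∃ f g : Fin d ↪o Fin n, x ∘ f = y ∘ g

theorem hasCommonSubseq_of_sublist {x y : Fin n → α} {z : List α}
    (hx : z.Sublist (List.ofFn x)) (hy : z.Sublist (List.ofFn y)) (hd : d ≤ z.length) :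
    HasCommonSubseq d x y := by
  rw [List.sublist_iff_exists_fin_orderEmbedding_get_eq] at hx hy
  obtain ⟨f, hf⟩ := hx
  obtain ⟨g, hg⟩ := hy
  let c := Fin.castLEOrderEmb hd
  let e := (Fin.castOrderIso (List.length_ofFn (f := x))).toOrderEmbedding
  let e' := (Fin.castOrderIso (List.length_ofFn (f := y))).toOrderEmbedding
  refine ⟨c.trans (f.trans e), c.trans (g.trans e'), funext fun i => ?_⟩
  have hfi := hf (c i)
  have hgi := hg (c i)
  rw [List.get_ofFn] at hfi hgi
  exact hfi.symm.trans hgi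

theorem sub_le_levenshtein_of_not_hasCommonSubseq [DecidableEq α] {x y : Fin n → α}
    (h : ¬ HasCommonSubseq d x y) :
    n - d ≤ levenshtein defaultCost (List.ofFn x) (List.ofFn y) := by
  obtain ⟨z, hx, hy, hlen⟩ :=
    exists_common_sublist_length_le_add_levenshtein (List.ofFn x) (List.ofFn y)
  rw [List.length_ofFn] at hlen
  by_contra hlt
  exact h (hasCommonSubseq_of_sublist hx hy (by omega))

theorem card_orderEmbedding_fin_le : Fintype.card (Fin d ↪o Fin n) ≤ 2 ^ n := by
  simpa using Fintype.card_le_of_injective (fun f : Fin d ↪o Fin n => Set.range f)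
    fun _ _ h => OrderEmbedding.range_inj.mp h

variable [Fintype α] [DecidableEq α]

theorem card_comp_eq_comp_le (f : Fin d → Fin n) {g : Fin d → Fin n} (hg : Injective g) :
    #{p : (Fin n → α) × (Fin n → α) | p.1 ∘ f = p.2 ∘ g} ≤
      Fintype.card α ^ n * Fintype.card α ^ (n - d) := by
  classical
  have hcard : Fintype.card ((Fin n → α) × ({i // i ∉ Set.range g} → α)) =
      Fintype.card α ^ n * Fintype.card α ^ (n - d) := by
    rw [Fintype.card_prod, Fintype.card_fun, Fintype.card_fun, Fintype.card_fin,
      Fintype.card_subtype_compl, Fintype.card_fin, Set.card_range_of_injective hg,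
      Fintype.card_fin]
  rw [← hcard, ← card_univ]
  refine card_le_card_of_injOn (fun p => (p.1, fun i => p.2 i)) (fun _ _ => mem_univ _) ?_
  intro p hp q hq hpq
  simp only [coe_filter, mem_univ, true_and, Set.mem_ofPred_eq] at hp hq
  simp only [Prod.mk.injEq, funext_iff] at hpq
  refine Prod.ext (funext hpq.1) (funext fun i => ?_)
  by_cases hi : i ∈ Set.range g
  · obtain ⟨j, rfl⟩ := hi
    have hpj := congrFun hp j
    have hqj := congrFun hq j
    simp only [comp_apply] at hpj hqj
    rw [← hpj, ← hqj, hpq.1]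
  · exact hpq.2 ⟨i, hi⟩

open scoped Classical in
theorem card_hasCommonSubseq_le :
    #{p : (Fin n → α) × (Fin n → α) | HasCommonSubseq d p.1 p.2} ≤
      4 ^ n * (Fintype.card α ^ n * Fintype.card α ^ (n - d)) := by
  have hsub : ({p | HasCommonSubseq d p.1 p.2} : Finset ((Fin n → α) × (Fin n → α))) ⊆
      (univ : Finset ((Fin d ↪o Fin n) × (Fin d ↪o Fin n))).biUnion
        fun fg => {p : (Fin n → α) × (Fin n → α) | p.1 ∘ fg.1 = p.2 ∘ fg.2} := by
    rintro p hp
    obtain ⟨f, g, hfg⟩ := (mem_filter.mp hp).2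
    exact mem_biUnion.mpr ⟨(f, g), mem_univ _, mem_filter.mpr ⟨mem_univ _, hfg⟩⟩
  have hpairs : Fintype.card ((Fin d ↪o Fin n) × (Fin d ↪o Fin n)) ≤ 4 ^ n := by
    rw [Fintype.card_prod, show 4 ^ n = 2 ^ n * 2 ^ n by rw [← mul_pow]; norm_num]
    exact Nat.mul_le_mul card_orderEmbedding_fin_le card_orderEmbedding_fin_le
  calc _ ≤ _ := card_le_card hsub
    _ ≤ _ := card_biUnion_le
    _ ≤ Fintype.card ((Fin d ↪o Fin n) × (Fin d ↪o Fin n)) *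
          (Fintype.card α ^ n * Fintype.card α ^ (n - d)) :=
        sum_le_card_nsmul _ _ _ fun fg _ => card_comp_eq_comp_le fg.1 fg.2.injective
    _ ≤ _ := Nat.mul_le_mul_right _ hpairs

end CommonSubseq

section SumBounds

open Finset

variable {α : Type*} [Fintype α] [DecidableEq α]

theorem sum_levenshtein_ofFn_le (n : ℕ) :
    ∑ p : (Fin n → α) × (Fin n → α),
        levenshtein defaultCost (List.ofFn p.1) (List.ofFn p.2) ≤
      Fintype.card ((Fin n → α) × (Fin n → α)) * n :=
  sum_le_card_nsmul _ _ _ fun p _ => by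
    simpa using levenshtein_defaultCost_le_length (by simp : (List.ofFn p.1).length = _)

open scoped Classical in
theorem card_mul_sub_le_sum_levenshtein_ofFn (n d : ℕ) :
    Fintype.card ((Fin n → α) × (Fin n → α)) * (n - d) ≤
      ∑ p : (Fin n → α) × (Fin n → α),
          levenshtein defaultCost (List.ofFn p.1) (List.ofFn p.2) +
        4 ^ n * (Fintype.card α ^ n * Fintype.card α ^ (n - d)) * (n - d) := by
  calc Fintype.card ((Fin n → α) × (Fin n → α)) * (n - d)
      = ∑ p ∈ (univ : Finset ((Fin n → α) × (Fin n → α))) with HasCommonSubseq d p.1 p.2,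
            (n - d) +
          ∑ p ∈ (univ : Finset ((Fin n → α) × (Fin n → α))) with ¬ HasCommonSubseq d p.1 p.2,
            (n - d) := by
        rw [sum_filter_add_sum_filter_not, sum_const, card_univ, smul_eq_mul]
    _ ≤ #{p : (Fin n → α) × (Fin n → α) | HasCommonSubseq d p.1 p.2} * (n - d) +
          ∑ p : (Fin n → α) × (Fin n → α),
            levenshtein defaultCost (List.ofFn p.1) (List.ofFn p.2) := by
        rw [sum_const, smul_eq_mul]
        gcongr
        refine (sum_le_sum fun p hp => ?_).trans (sum_le_sum_of_subset (filter_subset _ _))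
        exact sub_le_levenshtein_of_not_hasCommonSubseq (mem_filter.mp hp).2
    _ ≤ _ := by
        rw [add_comm]
        gcongr
        exact card_hasCommonSubseq_le

end SumBounds

theorem avgEditDist_eq (k n : ℕ) :
    avgEditDist k n = ((k : ℝ) ^ (2 * n))⁻¹ *
      (∑ p : (Fin n → Fin k) × (Fin n → Fin k), editDist (List.ofFn p.1) (List.ofFn p.2) : ℕ) := by
  rw [avgEditDist, Nat.cast_sum, Fintype.sum_prod_type]

theorem avgEditDist_le (k n : ℕ) : avgEditDist k n ≤ n := by
  have h := sum_levenshtein_ofFn_le (α := Fin k) n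
  simp only [Fintype.card_prod, Fintype.card_fun, Fintype.card_fin] at h
  rw [avgEditDist_eq]
  calc _ ≤ ((k : ℝ) ^ (2 * n))⁻¹ * ((k : ℝ) ^ (2 * n) * n) := by
        rw [two_mul, pow_add]
        gcongr
        exact_mod_cast h
    _ ≤ n := by
        rw [← mul_assoc]
        exact mul_le_of_le_one_left (Nat.cast_nonneg n) inv_mul_le_one

theorem alphaN_le_one (k n : ℕ) : alphaN k n ≤ 1 :=
  div_le_one_of_le₀ (avgEditDist_le k n) (Nat.cast_nonneg n)

theorem sub_mul_one_sub_le_avgEditDist {k n d : ℕ} (hk : 0 < k) (hd : d ≤ n) :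
    (n - d : ℝ) * (1 - 4 ^ n / (k : ℝ) ^ d) ≤ avgEditDist k n := by
  have h := card_mul_sub_le_sum_levenshtein_ofFn (α := Fin k) n d
  simp only [Fintype.card_prod, Fintype.card_fun, Fintype.card_fin] at h
  have hR : (k : ℝ) ^ n * (k : ℝ) ^ n * (n - d) ≤
      (∑ p : (Fin n → Fin k) × (Fin n → Fin k), editDist (List.ofFn p.1) (List.ofFn p.2) : ℕ) +
        4 ^ n * ((k : ℝ) ^ n * (k : ℝ) ^ (n - d)) * (n - d) := by
    exact_mod_cast h
  have hkd : (k : ℝ) ^ n = (k : ℝ) ^ (n - d) * (k : ℝ) ^ d := by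
    rw [← pow_add, Nat.sub_add_cancel hd]
  rw [avgEditDist_eq, le_inv_mul_iff₀ (by positivity), two_mul, pow_add]
  have hk' : (k : ℝ) ^ d ≠ 0 := by positivity
  calc (k : ℝ) ^ n * (k : ℝ) ^ n * ((n - d : ℝ) * (1 - 4 ^ n / (k : ℝ) ^ d))
      = (k : ℝ) ^ n * (k : ℝ) ^ n * (n - d) -
          4 ^ n * ((k : ℝ) ^ n * (k : ℝ) ^ (n - d)) * (n - d) := by
        rw [hkd]; field_simp
    _ ≤ _ := by linarith

theorem one_sub_inv_sub_le_alphaN {k m j : ℕ} (hk : 0 < k) (hm : 0 < m) (hj : 0 < j) :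
    1 - 1 / (m : ℝ) - (4 ^ m / k) ^ j ≤ alphaN k (m * j) := by
  have h := sub_mul_one_sub_le_avgEditDist hk (Nat.le_mul_of_pos_left j hm)
  rw [pow_mul, ← div_pow] at h
  have hq : 0 ≤ ((4 : ℝ) ^ m / k) ^ j := by positivity
  rw [alphaN, le_div_iff₀ (by exact_mod_cast Nat.mul_pos hm hj)]
  push_cast at h ⊢
  calc (1 - 1 / (m : ℝ) - (4 ^ m / k) ^ j) * (m * j)
      = (m * j - j) - (4 ^ m / k) ^ j * (m * j) := by field_simp
    _ ≤ (m * j - j) * (1 - (4 ^ m / k) ^ j) := by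
        nlinarith [mul_nonneg hq (Nat.cast_nonneg j : (0 : ℝ) ≤ j)]
    _ ≤ _ := h

theorem one_sub_inv_le_of_tendsto_alphaN {k m : ℕ} {a : ℝ} (hm : 0 < m) (hk : 4 ^ m < k)
    (h : Tendsto (fun n => alphaN k n) atTop (nhds a)) : 1 - 1 / (m : ℝ) ≤ a := by
  have hk0 : 0 < k := (Nat.zero_le _).trans_lt hk
  have hq : (4 : ℝ) ^ m / k < 1 := by
    rw [div_lt_one (by positivity)]
    exact_mod_cast hk
  have hlower : Tendsto (fun j : ℕ => 1 - 1 / (m : ℝ) - (4 ^ m / k) ^ j) atTop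
      (nhds (1 - 1 / m - 0)) :=
    tendsto_const_nhds.sub (tendsto_pow_atTop_nhds_zero_of_lt_one (by positivity) hq)
  have hsub : Tendsto (fun j => alphaN k (m * j)) atTop (nhds a) :=
    h.comp (tendsto_atTop_mono (fun j => Nat.le_mul_of_pos_left j hm) tendsto_id)
  rw [sub_zero] at hlower
  exact le_of_tendsto_of_tendsto hlower hsub
    (eventually_atTop.mpr ⟨1, fun j hj => one_sub_inv_sub_le_alphaN hk0 hm hj⟩)

/-- If for each `k ≥ 2` the sequence `α_k(n)` converges to `α_k`, then
`α_k → 1` as `k → ∞`. -/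
theorem alpha_tendsto_one (A : ℕ → ℝ)
    (hconv : ∀ k : ℕ, 2 ≤ k → Tendsto (fun n => alphaN k n) atTop (nhds (A k))) :
    Tendsto A atTop (nhds 1) := by
  refine tendsto_order.mpr ⟨fun a ha => ?_, fun a ha => ?_⟩
  · obtain ⟨m, hm⟩ := exists_nat_one_div_lt (sub_pos.mpr ha)
    filter_upwards [eventually_gt_atTop (4 ^ (m + 1))] with k hk
    have h4 : 4 ≤ 4 ^ (m + 1) := Nat.le_self_pow m.succ_ne_zero 4
    have := one_sub_inv_le_of_tendsto_alphaN m.succ_pos hk (hconv k (by omega))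
    push_cast at this
    linarith
  · filter_upwards [eventually_ge_atTop 2] with k hk
    exact (le_of_tendsto' (hconv k hk) (alphaN_le_one k)).trans_lt ha
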